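/- arXiv:2210.11627 — 3 statements merged into one kernel-verified Lean document; each statement's English description precedes it below -/
import Mathlib

section
/- For a non-dictatorial voting by committees f^W that is NOM, every agent's veto set is empty: V_i = ∅ for all i ∈ N. -/
/-- A preference profile: each agent `i : Fin n` has a strict preference,
modeled as a linear order on the set of alternatives `X`. -/
abbrev Profile (n : ℕ) (X : Type*) := Fin n → LinearOrder X

/-- The top (best) alternative of a preference `L`. -/
noncomputable def top {X : Type*} [Fintype X] [Nonempty X] (L : LinearOrder X) : X :=
  @Finset.max' X L Finset.univ Finset.univ_nonempty

/-- `x` is strictly preferred to `y` according to `L`. -/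
def prefers {X : Type*} (L : LinearOrder X) (x y : X) : Prop := L.lt y x

/-- The option set left open by preference `L` of agent `i` at rule `f`. -/
def OptionSet {n : ℕ} {X : Type*} (f : Profile n X → X) (i : Fin n) (L : LinearOrder X) :
    Set X :=
  {x | ∃ P : Profile n X, P i = L ∧ f P = x}

/-- `Li'` is a profitable manipulation of `f` at (true preference) `Li` for agent `i`. -/
def IsManip {n : ℕ} {X : Type*} (f : Profile n X → X) (i : Fin n)
    (Li Li' : LinearOrder X) : Prop :=
  ∃ P : Profile n X, P i = Li ∧ prefers Li (f (Function.update P i Li')) (f P)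

/-- The worst element of `O(Li')` is strictly `Li`-preferred to the worst element of `O(Li)`.
For nonempty finite option sets this is equivalent to: some element of `O(Li)` is strictly
worse (w.r.t. `Li`) than every element of `O(Li')`. -/
def WorstImproves {n : ℕ} {X : Type*} (f : Profile n X → X) (i : Fin n)
    (Li Li' : LinearOrder X) : Prop :=
  ∃ w ∈ OptionSet f i Li, ∀ w' ∈ OptionSet f i Li', prefers Li w' w

/-- The best element of `O(Li')` is strictly `Li`-preferred to the best element of `O(Li)`.
For nonempty finite option sets this is equivalent to: some element of `O(Li')` is strictly
better (w.r.t. `Li`) than every element of `O(Li)`. -/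
def BestImproves {n : ℕ} {X : Type*} (f : Profile n X → X) (i : Fin n)
    (Li Li' : LinearOrder X) : Prop :=
  ∃ b' ∈ OptionSet f i Li', ∀ b ∈ OptionSet f i Li, prefers Li b' b

/-- `Li'` is an obvious manipulation of `f` at `Li` for agent `i`. -/
def IsObviousManip {n : ℕ} {X : Type*} (f : Profile n X → X) (i : Fin n)
    (Li Li' : LinearOrder X) : Prop :=
  IsManip f i Li Li' ∧ (WorstImproves f i Li Li' ∨ BestImproves f i Li Li')

/-- `f` is not obviously manipulable. -/
def NOM {n : ℕ} {X : Type*} (f : Profile n X → X) : Prop :=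
  ∀ (i : Fin n) (Li Li' : LinearOrder X), ¬ IsObviousManip f i Li Li'

/-- `f` is tops-only. -/
def TopsOnly {n : ℕ} {X : Type*} [Fintype X] [Nonempty X] (f : Profile n X → X) : Prop :=
  ∀ P P' : Profile n X, (∀ i, top (P i) = top (P' i)) → f P = f P'

/-- The set `V_i` of alternatives that agent `i` vetoes via some preference. -/
def VetoSet {n : ℕ} {X : Type*} (f : Profile n X → X) (i : Fin n) : Set X :=
  {x | ∃ L : LinearOrder X, x ∉ OptionSet f i L}

/-- The set `SV_i` of alternatives strongly vetoed by agent `i`: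
`x` is vetoed via `L` precisely when the top of `L` differs from `x`. -/
def StrongVetoSet {n : ℕ} {X : Type*} [Fintype X] [Nonempty X]
    (f : Profile n X → X) (i : Fin n) : Set X :=
  {x | ∀ L : LinearOrder X, x ∉ OptionSet f i L ↔ top L ≠ x}

/-- `f` is dictatorial: some agent's top alternative is always selected. -/
def Dictatorial {n : ℕ} {X : Type*} [Fintype X] [Nonempty X]
    (f : Profile n X → X) : Prop :=
  ∃ i : Fin n, ∀ P : Profile n X, f P = top (P i)

open scoped Classical

/-- `Wk` is a committee: a nonempty, monotone family of nonempty coalitions of agents. -/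
def Committee {n : ℕ} (Wk : Set (Finset (Fin n))) : Prop :=
  Wk.Nonempty ∧ (∀ M ∈ Wk, M.Nonempty) ∧
    ∀ M ∈ Wk, ∀ M' : Finset (Fin n), M ⊆ M' → M' ∈ Wk

/-- Voting by committees: object `k` is chosen iff the set of agents whose top contains
`k` is a winning coalition in `W k`. Alternatives are subsets of the set `K` of objects. -/
noncomputable def vbc {n : ℕ} {K : Type*} [Fintype K] [DecidableEq K]
    (W : K → Set (Finset (Fin n))) (P : Profile n (Finset K)) : Finset K :=
  Finset.univ.filter fun k =>
    (Finset.univ.filter fun i : Fin n => k ∈ top (P i)) ∈ W k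

section Aux

variable {n : ℕ} {K : Type*} [Fintype K] [DecidableEq K]

/-- A linear order on `Finset K` obtained by lifting along a score function (lexicographic
with an arbitrary fixed linear order as tie-break). -/
noncomputable def mkLin (g : Finset K → ℕ) : LinearOrder (Finset K) :=
  LinearOrder.lift'
    (fun x => toLex ((g x, (Fintype.equivFin (Finset K) x : ℕ)) : ℕ × ℕ))
    (fun x y h => by
      have h2 : ((Fintype.equivFin (Finset K) x : ℕ)) = (Fintype.equivFin (Finset K) y : ℕ) := by
        have := congrArg (fun p : ℕ ×ₗ ℕ => (ofLex p).2) h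
        simpa using this
      exact (Fintype.equivFin (Finset K)).injective (Fin.ext h2))

lemma mkLin_lt (g : Finset K → ℕ) {x y : Finset K} (h : g x < g y) : (mkLin g).lt x y := by
  show toLex ((g x, (Fintype.equivFin (Finset K) x : ℕ)) : ℕ × ℕ) <
    toLex ((g y, (Fintype.equivFin (Finset K) y : ℕ)) : ℕ × ℕ)
  exact Prod.Lex.lt_iff.mpr (Or.inl h)

lemma mkLin_top (g : Finset K → ℕ) {S : Finset K} (hS : ∀ x, x ≠ S → g x < g S) :
    top (mkLin g) = S := by
  letI L := mkLin g
  have hle : ∀ x ∈ (Finset.univ : Finset (Finset K)), L.le x S := by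
    intro x _
    by_cases hx : x = S
    · subst hx; exact L.le_refl x
    · exact @le_of_lt _ (mkLin g).toPreorder _ _ (mkLin_lt g (hS x hx))
  have h1 : L.le (@Finset.max' _ L Finset.univ Finset.univ_nonempty) S :=
    @Finset.max'_le _ L Finset.univ _ S hle
  have h2 : L.le S (@Finset.max' _ L Finset.univ Finset.univ_nonempty) :=
    @Finset.le_max' _ L Finset.univ S (Finset.mem_univ S)
  exact L.le_antisymm _ _ h1 h2

variable (W : K → Set (Finset (Fin n)))

/-- The combinatorial condition characterizing membership of `T` in the option set of agent `i`
when `i`'s reported top is `S`. -/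
def Cnd (i : Fin n) (S T : Finset K) : Prop :=
  (∀ k ∈ S, {i} ∈ W k → k ∈ T) ∧
    (∀ k ∈ T, k ∉ S → ({i}ᶜ : Finset (Fin n)) ∈ W k)

lemma optionSet_iff (hW : ∀ k, Committee (W k)) (i : Fin n) (L : LinearOrder (Finset K))
    (T : Finset K) :
    T ∈ OptionSet (vbc W) i L ↔ Cnd W i (top L) T := by
  constructor
  · rintro ⟨P, hPi, rfl⟩
    constructor
    · intro k hkS hik
      have hiC : i ∈ Finset.univ.filter fun j : Fin n => k ∈ top (P j) := by
        simp [hPi, hkS]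
      have : (Finset.univ.filter fun j : Fin n => k ∈ top (P j)) ∈ W k := by
        refine (hW k).2.2 {i} hik _ ?_
        intro j hj
        simp only [Finset.mem_singleton] at hj
        subst hj; exact hiC
      simp [vbc, this]
    · intro k hkT hkS
      simp only [vbc, Finset.mem_filter, Finset.mem_univ, true_and] at hkT
      refine (hW k).2.2 _ hkT _ ?_
      intro j hj
      simp only [Finset.mem_filter, Finset.mem_univ, true_and] at hj
      simp only [Finset.mem_compl, Finset.mem_singleton]
      intro hji
      subst hji
      rw [hPi] at hj
      exact hkS hj
  · rintro ⟨h1, h2⟩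
    classical
    refine ⟨fun j => if j = i then L else mkLin (fun x => if x = T then 1 else 0), by simp, ?_⟩
    have htop : top (mkLin (fun x : Finset K => if x = T then 1 else 0)) = T := by
      apply mkLin_top
      intro x hx
      simp [hx]
    ext k
    simp only [vbc, Finset.mem_filter, Finset.mem_univ, true_and]
    have hC : (Finset.univ.filter fun j : Fin n =>
        k ∈ top (if j = i then L else mkLin (fun x => if x = T then 1 else 0))) =
        Finset.univ.filter fun j : Fin n => if j = i then k ∈ top L else k ∈ T := by
      apply Finset.filter_congr
      intro j _
      by_cases hj : j = i <;> simp [hj, htop]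
    rw [hC]
    by_cases hkT : k ∈ T <;> by_cases hkS : k ∈ top L
    · -- coalition is univ
      have : (Finset.univ.filter fun j : Fin n => if j = i then k ∈ top L else k ∈ T) =
          Finset.univ := by
        ext j; by_cases hj : j = i <;> simp [hj, hkS, hkT]
      rw [this]
      obtain ⟨M, hM⟩ := (hW k).1
      simpa [hkT] using (hW k).2.2 M hM Finset.univ (Finset.subset_univ M)
    · -- coalition is {i}ᶜ
      have : (Finset.univ.filter fun j : Fin n => if j = i then k ∈ top L else k ∈ T) =
          ({i}ᶜ : Finset (Fin n)) := by
        ext j; by_cases hj : j = i <;> simp [hj, hkS, hkT]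
      rw [this]
      simpa [hkT] using h2 k hkT hkS
    · -- coalition is {i}
      have : (Finset.univ.filter fun j : Fin n => if j = i then k ∈ top L else k ∈ T) =
          ({i} : Finset (Fin n)) := by
        ext j; by_cases hj : j = i <;> simp [hj, hkS, hkT]
      rw [this]
      simp only [hkT, iff_false]
      intro hmem
      exact hkT (h1 k hkS hmem)
    · -- coalition is ∅
      have : (Finset.univ.filter fun j : Fin n => if j = i then k ∈ top L else k ∈ T) =
          (∅ : Finset (Fin n)) := by
        ext j; by_cases hj : j = i <;> simp [hj, hkS, hkT]
      rw [this]
      simp only [hkT, iff_false]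
      intro hmem
      exact Finset.not_nonempty_empty ((hW k).2.1 ∅ hmem)

/-- NOM forces: any outcome achievable under top `S` other than `S` itself is achievable
under any other top `S'`. -/
lemma key_lemma (hW : ∀ k, Committee (W k)) (hnom : NOM (vbc W)) (i : Fin n)
    (S S' T : Finset K) (hTS : T ≠ S) (hmem : Cnd W i S T) : Cnd W i S' T := by
  by_contra hn
  classical
  set g : Finset K → ℕ := fun x => if x = T then 0 else if x = S then 2 else 1 with hg
  set g' : Finset K → ℕ := fun x => if x = S' then 1 else 0 with hg'
  set L := mkLin g with hL
  set L' := mkLin g' with hL'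
  have htopL : top L = S := by
    apply mkLin_top
    intro x hx
    have hST : S ≠ T := Ne.symm hTS
    by_cases hxT : x = T <;> simp [hg, hx, hxT, hST]
  have htopL' : top L' = S' := by
    apply mkLin_top
    intro x hx
    simp [hg', hx]
  have hmin : ∀ x : Finset K, x ≠ T → prefers L x T := by
    intro x hx
    apply mkLin_lt
    have hST : S ≠ T := Ne.symm hTS
    by_cases hxS : x = S <;> simp [hg, hx, hxS, hST]
  have hTL : T ∈ OptionSet (vbc W) i L := by
    rw [optionSet_iff W hW i L T, htopL]; exact hmem
  have hnotL' : ∀ x ∈ OptionSet (vbc W) i L', x ≠ T := by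
    intro x hx hxT
    subst hxT
    rw [optionSet_iff W hW i L' x, htopL'] at hx
    exact hn hx
  obtain ⟨P, hPi, hfP⟩ := hTL
  apply hnom i L L'
  refine ⟨⟨P, hPi, ?_⟩, Or.inl ⟨T, ⟨P, hPi, hfP⟩, ?_⟩⟩
  · rw [hfP]
    apply hmin
    exact hnotL' _ ⟨Function.update P i L', Function.update_self i L' P, rfl⟩
  · intro w' hw'
    exact hmin w' (hnotL' w' hw')

end Aux

/-- A non-dictatorial voting by committees that is NOM has empty veto sets:
`V_i = ∅` for every agent `i`. -/
theorem vbc_NOM_vetoSet_empty {n : ℕ} {K : Type*} [Fintype K] [DecidableEq K]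
    (hn : 2 ≤ n) (hK : 2 ≤ Fintype.card K)
    (W : K → Set (Finset (Fin n))) (hW : ∀ k, Committee (W k))
    (hnd : ¬ Dictatorial (vbc W)) (hnom : NOM (vbc W)) :
    ∀ i : Fin n, VetoSet (vbc W) i = ∅ := by
  intro i
  have Key := key_lemma W hW hnom i
  obtain ⟨a, b, hab⟩ := Fintype.exists_pair_of_one_lt_card (lt_of_lt_of_le one_lt_two hK)
  -- Step 1: agent `i` cannot force any object in.
  have hA : ∀ k, ({i} : Finset (Fin n)) ∉ W k := by
    by_contra hA0
    push_neg at hA0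
    obtain ⟨k, hk⟩ := hA0
    by_cases hAall : ∀ k', ({i} : Finset (Fin n)) ∈ W k'
    · by_cases hBall : ∀ k', ({i}ᶜ : Finset (Fin n)) ∉ W k'
      · -- `i` is a dictator
        apply hnd
        refine ⟨i, fun P => ?_⟩
        ext k'
        simp only [vbc, Finset.mem_filter, Finset.mem_univ, true_and]
        constructor
        · intro hmem
          by_contra hkt
          apply hBall k'
          refine (hW k').2.2 _ hmem _ ?_
          intro j hj
          simp only [Finset.mem_filter, Finset.mem_univ, true_and] at hj
          simp only [Finset.mem_compl, Finset.mem_singleton]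
          rintro rfl
          exact hkt hj
        · intro hkt
          refine (hW k').2.2 {i} (hAall k') _ ?_
          intro j hj
          simp only [Finset.mem_singleton] at hj
          subst hj
          simp [hkt]
      · push_neg at hBall
        obtain ⟨k0, hk0⟩ := hBall
        obtain ⟨k1, hk1⟩ : ∃ k1, k1 ≠ k0 := by
          by_cases h : a = k0
          · exact ⟨b, by simpa [h] using hab.symm⟩
          · exact ⟨a, h⟩
        have h := Key ∅ {k1} {k0} (Finset.singleton_ne_empty k0)
          ⟨by simp, by
            intro k' hk' _
            simp only [Finset.mem_singleton] at hk'
            subst hk'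
            exact hk0⟩
        have h1 := h.1 k1 (by simp) (hAall k1)
        simp only [Finset.mem_singleton] at h1
        exact hk1 h1
    · push_neg at hAall
      obtain ⟨k0, hk0⟩ := hAall
      have h := Key {k0} {k} ∅ (Finset.singleton_ne_empty k0).symm
        ⟨by
          intro k' hk' hik
          simp only [Finset.mem_singleton] at hk'
          subst hk'
          exact absurd hik hk0, by simp⟩
      have h1 := h.1 k (by simp) hk
      simp at h1
  -- Step 2: agent `i` cannot force any object out.
  have hB : ∀ k, ({i}ᶜ : Finset (Fin n)) ∈ W k := by
    by_contra hB0
    push_neg at hB0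
    obtain ⟨k, hk⟩ := hB0
    by_cases hBall : ∀ k', ({i}ᶜ : Finset (Fin n)) ∉ W k'
    · have hTS : ({b} : Finset K) ≠ {a, b} := by
        intro h
        have : a ∈ ({b} : Finset K) := by rw [h]; simp
        simp only [Finset.mem_singleton] at this
        exact hab this
      have h := Key {a, b} {a} {b} hTS
        ⟨by
          intro k' hk' hik
          exact absurd hik (hA k'), by
          intro k' hk' hk''
          simp only [Finset.mem_singleton] at hk'
          subst hk'
          simp at hk''⟩
      have h1 := h.2 b (by simp) (by simp [Ne.symm hab])
      exact hBall b h1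
    · push_neg at hBall
      obtain ⟨k0, hk0⟩ := hBall
      have hkk0 : k ≠ k0 := fun h => hk (h ▸ hk0)
      have hTS : ({k, k0} : Finset K) ≠ {k} := by
        intro h
        have : k0 ∈ ({k} : Finset K) := by rw [← h]; simp
        simp only [Finset.mem_singleton] at this
        exact hkk0 this.symm
      have h := Key {k} ∅ {k, k0} hTS
        ⟨by
          intro k' hk' _
          simp only [Finset.mem_singleton] at hk'
          subst hk'
          simp, by
          intro k' hk' hk''
          simp only [Finset.mem_insert, Finset.mem_singleton] at hk'
          rcases hk' with rfl | rfl
          · simp at hk''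
          · exact hk0⟩
      have h1 := h.2 k (by simp) (by simp)
      exact hk h1
  -- Conclusion: every alternative is in every option set.
  ext x
  simp only [VetoSet, Set.mem_setOf_eq, Set.mem_empty_iff_false, iff_false, not_exists, not_not]
  intro L
  rw [optionSet_iff W hW i L x]
  exact ⟨fun k hk hik => absurd hik (hA k), fun k _ _ => hB k⟩
end

section
/- If an onto rule f on the universal domain (not necessarily tops-only) satisfies SV_i = V_i for every agent i, then f is not obviously manipulable. -/
/-!
If every vetoable alternative is strongly vetoed, then an agent's true top alternative `t` is
always in her option set, so no misreport can improve on her best outcome. For the worst outcome: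
if some `w ∈ O(L)` were beaten by all of `O(L')`, then `w ∉ O(L')`, so `w` is vetoable, hence
strongly vetoed, and `w ∈ O(L)` forces `w = t`; but nothing in the nonempty set `O(L')` beats `t`.
-/

theorem not_prefers_top {X : Type*} [Fintype X] [Nonempty X] (L : LinearOrder X) (x : X) :
    ¬ prefers L x (top L) :=
  @not_lt_of_ge X L.toPartialOrder.toPreorder _ _
    (@Finset.le_max' X L Finset.univ x (Finset.mem_univ x))

section OptionSet

variable {n : ℕ} {X : Type*} (f : Profile n X → X) (i : Fin n)

theorem optionSet_nonempty (L : LinearOrder X) : (OptionSet f i L).Nonempty :=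
  ⟨f fun _ => L, fun _ => L, rfl, rfl⟩

variable [Fintype X] [Nonempty X] {f i}

theorem mem_optionSet_iff_of_mem_strongVetoSet {x : X} (hx : x ∈ StrongVetoSet f i)
    (L : LinearOrder X) : x ∈ OptionSet f i L ↔ top L = x :=
  not_iff_not.mp (hx L)

theorem top_mem_optionSet (h : VetoSet f i ⊆ StrongVetoSet f i) (L : LinearOrder X) :
    top L ∈ OptionSet f i L := by
  by_contra hnot
  exact hnot ((mem_optionSet_iff_of_mem_strongVetoSet (h ⟨L, hnot⟩) L).mpr rfl)

theorem not_bestImproves (h : VetoSet f i ⊆ StrongVetoSet f i) (L L' : LinearOrder X) :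
    ¬ BestImproves f i L L' := by
  rintro ⟨b', -, hbeats⟩
  exact not_prefers_top L b' (hbeats _ (top_mem_optionSet h L))

theorem not_worstImproves (h : VetoSet f i ⊆ StrongVetoSet f i) (L L' : LinearOrder X) :
    ¬ WorstImproves f i L L' := by
  rintro ⟨w, hw, hbeaten⟩
  have hw_vetoed : w ∈ VetoSet f i :=
    ⟨L', fun hw' => @lt_irrefl X L.toPartialOrder.toPreorder w (hbeaten w hw')⟩
  have hw_top : top L = w := (mem_optionSet_iff_of_mem_strongVetoSet (h hw_vetoed) L).mp hw
  obtain ⟨y, hy⟩ := optionSet_nonempty f i L'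
  exact not_prefers_top L y (hw_top ▸ hbeaten y hy)

end OptionSet

theorem strongVeto_eq_veto_implies_NOM_general {n : ℕ} {X : Type*} [Fintype X] [Nonempty X]
    (f : Profile n X → X)
    (h : ∀ i : Fin n, StrongVetoSet f i = VetoSet f i) :
    NOM f := by
  rintro i L L' ⟨-, hworst | hbest⟩
  · exact not_worstImproves (h i).ge L L' hworst
  · exact not_bestImproves (h i).ge L L' hbest

/-- If an onto rule (not necessarily tops-only) satisfies `SV_i = V_i` for every agent,
then it is not obviously manipulable. -/
theorem strongVeto_eq_veto_implies_NOM {n : ℕ} {X : Type*} [Fintype X] [Nonempty X]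
    (f : Profile n X → X) (honto : Function.Surjective f)
    (h : ∀ i : Fin n, StrongVetoSet f i = VetoSet f i) :
    NOM f :=
  strongVeto_eq_veto_implies_NOM_general f h
end

section
/- For an onto tops-only rule f on the universal domain, if f admits no worst-case obvious manipulation then it admits no best-case obvious manipulation; hence for tops-only rules a manipulation is obvious if and only if it is worst-case obvious. -/
/-
Suppose `Li'` is a best-case obvious manipulation at `Li`. Some outcome reachable under `Li'` is
strictly better than everything reachable under `Li`, so the top `t` of `Li` is not reachable
under `Li`. Being onto, `f` selects `t` at some profile `P₀`, and as `f` is tops-only the top `a`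
of `P₀ i` differs from `t`. Let `R` rank `a` first and `t` last. Under `R` the outcome `t` is
reachable, so it is the worst element of `O(R)`, whereas every element of `O(Li)` is `R`-better
than `t`. At `P₀` with `P₀ i` replaced by `R`, reporting `Li` is therefore a worst-case obvious
manipulation.
-/

open Function

section Preferences

variable {X : Type*} [Fintype X] [Nonempty X]

theorem le_top_of_linearOrder (L : LinearOrder X) (x : X) : L.le x (top L) := by
  let := L
  exact Finset.le_max' _ x (Finset.mem_univ x)

theorem top_eq_of_forall_le (L : LinearOrder X) {a : X} (h : ∀ x, L.le x a) : top L = a := by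
  let := L
  exact le_antisymm (h _) (le_top_of_linearOrder L a)

theorem exists_linearOrder_top_eq_of_ne {a t : X} (hat : a ≠ t) :
    ∃ R : LinearOrder X, top R = a ∧ ∀ x, x ≠ t → prefers R x t := by
  classical
  let e := Fintype.equivFin X
  let rank : X → ℕ := fun x => if x = t then 0 else if x = a then 2 else 1
  let g : X → ℕ ×ₗ Fin (Fintype.card X) := fun x => toLex (rank x, e x)
  have hg : Injective g := fun x y hxy => e.injective (Prod.ext_iff.1 (toLex.injective hxy)).2
  let R : LinearOrder X := LinearOrder.lift' g hg
  have hlt : ∀ x y, rank x < rank y → R.lt x y := fun _ _ h =>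
    Prod.Lex.toLex_lt_toLex.2 (.inl h)
  refine ⟨R, top_eq_of_forall_le R fun x => ?_, fun x hx => hlt t x ?_⟩
  · by_cases hxa : x = a
    · exact hxa ▸ R.le_refl x
    · refine (hlt x a ?_).le
      by_cases hxt : x = t <;> simp [rank, hxt, hxa, hat]
  · by_cases hxa : x = a <;> simp [rank, hx, hxa, hat]

end Preferences

section Manipulation

variable {n : ℕ} {X : Type*} {f : Profile n X → X} {i : Fin n}

theorem apply_update_mem_optionSet (f : Profile n X → X) (P : Profile n X) (i : Fin n)
    (L : LinearOrder X) : f (update P i L) ∈ OptionSet f i L :=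
  ⟨update P i L, update_self .., rfl⟩

variable [Fintype X] [Nonempty X]

theorem TopsOnly.apply_update_of_top_eq (htops : TopsOnly f) (P : Profile n X)
    {L : LinearOrder X} (hL : top L = top (P i)) : f (update P i L) = f P := by
  refine htops _ _ fun j => ?_
  rcases eq_or_ne j i with rfl | hj
  · rw [update_self, hL]
  · rw [update_of_ne hj]

theorem BestImproves.top_notMem_optionSet {Li Li' : LinearOrder X}
    (h : BestImproves f i Li Li') : top Li ∉ OptionSet f i Li := by
  obtain ⟨b', -, hb'⟩ := h
  intro ht
  let := Li
  exact (hb' _ ht).not_ge (le_top_of_linearOrder Li b')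

theorem exists_worstCase_manip_of_top_notMem_optionSet (honto : Surjective f)
    (htops : TopsOnly f) {Li : LinearOrder X} (ht : top Li ∉ OptionSet f i Li) :
    ∃ R : LinearOrder X, IsManip f i R Li ∧ WorstImproves f i R Li := by
  obtain ⟨P₀, hP₀⟩ := honto (top Li)
  have hne : top (P₀ i) ≠ top Li := by
    intro h
    apply ht
    rw [← hP₀, ← htops.apply_update_of_top_eq P₀ h.symm]
    exact apply_update_mem_optionSet f P₀ i Li
  obtain ⟨R, hRtop, hRbot⟩ := exists_linearOrder_top_eq_of_ne hne
  have hR : f (update P₀ i R) = top Li := (htops.apply_update_of_top_eq P₀ hRtop).trans hP₀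
  have hbelow : ∀ w ∈ OptionSet f i Li, prefers R w (top Li) := fun w hw =>
    hRbot w fun h => ht (h ▸ hw)
  have hworst : WorstImproves f i R Li := ⟨top Li, hR ▸ apply_update_mem_optionSet .., hbelow⟩
  have hmanip : IsManip f i R Li :=
    ⟨update P₀ i R, update_self .., hR ▸ hbelow _ (apply_update_mem_optionSet ..)⟩
  exact ⟨R, hmanip, hworst⟩

theorem BestImproves.exists_worstCase_manip (honto : Surjective f) (htops : TopsOnly f)
    {Li Li' : LinearOrder X} (hB : BestImproves f i Li Li') :
    ∃ R : LinearOrder X, IsManip f i R Li ∧ WorstImproves f i R Li :=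
  exists_worstCase_manip_of_top_notMem_optionSet honto htops hB.top_notMem_optionSet

end Manipulation

/-- For an onto tops-only rule: if it admits no worst-case obvious manipulation then it
admits no best-case obvious manipulation; hence it is NOM iff it admits no worst-case
obvious manipulation. -/
theorem worstCase_suffices {n : ℕ} {X : Type*} [Fintype X] [Nonempty X]
    (f : Profile n X → X) (honto : Function.Surjective f) (htops : TopsOnly f) :
    ((∀ (i : Fin n) (Li Li' : LinearOrder X),
        IsManip f i Li Li' → ¬ WorstImproves f i Li Li') →
      ∀ (i : Fin n) (Li Li' : LinearOrder X),
        IsManip f i Li Li' → ¬ BestImproves f i Li Li') ∧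
    ((∀ (i : Fin n) (Li Li' : LinearOrder X),
        ¬ (IsManip f i Li Li' ∧ WorstImproves f i Li Li')) ↔ NOM f) := by
  refine ⟨fun hW i Li Li' _ hB => ?_, fun hW i Li Li' ⟨hmanip, hobvious⟩ => ?_,
    fun hnom i Li Li' ⟨hmanip, hworst⟩ => hnom i Li Li' ⟨hmanip, .inl hworst⟩⟩
  · obtain ⟨R, hmanip, hworst⟩ := hB.exists_worstCase_manip honto htops
    exact hW i R Li hmanip hworst
  · rcases hobvious with hworst | hbest
    · exact hW i Li Li' ⟨hmanip, hworst⟩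
    · obtain ⟨R, hmanip', hworst⟩ := hbest.exists_worstCase_manip honto htops
      exact hW i R Li ⟨hmanip', hworst⟩
end
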